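/- Let N ≥ 2, M = (N−1)² + 1, U ∈ (0,1), and let (cₖ, fₖ, θₖ), k = 1,…,K, with K < N, cₖ ∈ ℂ \ {0}, fₖ ∈ [0,1), θₖ ∈ [0,U], and the pairs (fₖ,θₖ) pairwise distinct. Set z* = Σₖ cₖ d(fₖ,θₖ), x = P z*, and D = {(fₖ,θₖ)}ₖ. Suppose: (1) there exists q ∈ ℂ^N such that the dual polynomial Q(f,θ) = Σ_{n=0}^{N−1} q(n) e^{−2πi(fn+θn²)} satisfies Q(fₖ,θₖ) = cₖ/|cₖ| for every k and |Q(f,θ)| < 1 for every (f,θ) ∈ [0,1)×[0,U] with (f,θ) ∉ D; and (2) the vectors {P d(fₖ,θₖ) : k = 1,…,K} ⊂ ℂ^N are linearly independent over ℂ. Then z* is the unique minimizer of ‖z‖_{A_c} over all z ∈ ℂ^{NM} satisfying P z = x. -/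

import Mathlib

open Complex Set
open scoped Real ENNReal ComplexConjugate ComplexOrder

noncomputable section

def atomA (N : ℕ) (f : ℝ) : Fin N → ℂ :=
  fun n => Complex.exp (2 * (Real.pi : ℂ) * Complex.I * ((n : ℕ) : ℂ) * (f : ℂ))

def atomB (N : ℕ) (θ : ℝ) : Fin ((N - 1) ^ 2 + 1) → ℂ :=
  fun m => Complex.exp (2 * (Real.pi : ℂ) * Complex.I * ((m : ℕ) : ℂ) * (θ : ℂ))

def atomD (N : ℕ) (f θ : ℝ) : Fin N × Fin ((N - 1) ^ 2 + 1) → ℂ :=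
  fun p => atomA N f p.1 * atomB N θ p.2

def meas (N : ℕ) (z : Fin N × Fin ((N - 1) ^ 2 + 1) → ℂ) : Fin N → ℂ :=
  fun n => z (n, ⟨n.1 ^ 2, by
    have h1 : n.1 < N := n.2
    have h2 : n.1 ^ 2 ≤ (N - 1) ^ 2 := Nat.pow_le_pow_left (by omega) 2
    omega⟩)

def atomicNorm (N : ℕ) (U : ℝ) (z : Fin N × Fin ((N - 1) ^ 2 + 1) → ℂ) : ℝ≥0∞ :=
  sInf { s : ℝ≥0∞ | ∃ (K : ℕ) (c : Fin K → ℂ) (f θ : Fin K → ℝ),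
    (∀ k, f k ∈ Set.Ico (0 : ℝ) 1) ∧ (∀ k, θ k ∈ Set.Icc (0 : ℝ) U) ∧
    z = ∑ k, c k • atomD N (f k) (θ k) ∧
    s = ∑ k, ENNReal.ofReal ‖c k‖ }

def dualPoly (N : ℕ) (q : Fin N → ℂ) (f θ : ℝ) : ℂ :=
  ∑ n : Fin N, q n * Complex.exp (-(2 * (Real.pi : ℂ) * Complex.I) *
    ((f : ℂ) * ((n : ℕ) : ℂ) + (θ : ℂ) * ((n : ℕ) : ℂ) ^ 2))

def twoFoldToep (N : ℕ) (T : ℤ → ℤ → ℂ) :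
    Matrix (Fin N × Fin ((N - 1) ^ 2 + 1)) (Fin N × Fin ((N - 1) ^ 2 + 1)) ℂ :=
  Matrix.of fun p q => T (((p.1 : ℕ) : ℤ) - ((q.1 : ℕ) : ℤ)) (((p.2 : ℕ) : ℤ) - ((q.2 : ℕ) : ℤ))

def twoFoldToepG (N : ℕ) (U : ℝ) (T : ℤ → ℤ → ℂ) :
    Matrix (Fin N × Fin ((N - 1) ^ 2)) (Fin N × Fin ((N - 1) ^ 2)) ℂ :=
  Matrix.of fun p q =>
    Complex.exp ((Real.pi : ℂ) * Complex.I * (U : ℂ)) *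
        T (((p.1 : ℕ) : ℤ) - ((q.1 : ℕ) : ℤ)) (((p.2 : ℕ) : ℤ) - ((q.2 : ℕ) : ℤ) + 1)
      + ((-2 * Real.cos (Real.pi * U) : ℝ) : ℂ) *
        T (((p.1 : ℕ) : ℤ) - ((q.1 : ℕ) : ℤ)) (((p.2 : ℕ) : ℤ) - ((q.2 : ℕ) : ℤ))
      + conj (Complex.exp ((Real.pi : ℂ) * Complex.I * (U : ℂ))) *
        T (((p.1 : ℕ) : ℤ) - ((q.1 : ℕ) : ℤ)) (((p.2 : ℕ) : ℤ) - ((q.2 : ℕ) : ℤ) - 1)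

def blockMat {ι : Type*} [Fintype ι] (W : Matrix ι ι ℂ) (z : ι → ℂ) (t : ℝ) :
    Matrix (ι ⊕ Unit) (ι ⊕ Unit) ℂ :=
  Matrix.fromBlocks W (Matrix.of fun i (_ : Unit) => z i)
    (Matrix.of fun (_ : Unit) j => conj (z j)) (Matrix.of fun (_ : Unit) (_ : Unit) => (t : ℂ))

def sdpVal (N : ℕ) (U : ℝ) (z : Fin N × Fin ((N - 1) ^ 2 + 1) → ℂ) : ℝ≥0∞ :=
  sInf { s : ℝ≥0∞ | ∃ (T : ℤ → ℤ → ℂ) (t : ℝ),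
    (blockMat (twoFoldToep N T) z t).PosSemidef ∧
    (twoFoldToepG N U T).PosSemidef ∧
    s = ENNReal.ofReal ((1 / (2 * ((N * ((N - 1) ^ 2 + 1) : ℕ) : ℝ))) *
          ((twoFoldToep N T).trace).re + t / 2) }

def measMat (N : ℕ) : Matrix (Fin N) (Fin N × Fin ((N - 1) ^ 2 + 1)) ℂ :=
  Matrix.of fun n p => if p.1 = n ∧ (p.2 : ℕ) = n.1 ^ 2 then 1 else 0

def gval (U θ : ℝ) : ℂ :=
  Complex.exp ((Real.pi : ℂ) * Complex.I * (U : ℂ)) * Complex.exp (-(2 * (Real.pi : ℂ) * Complex.I) * (θ : ℂ))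
    + ((-2 * Real.cos (Real.pi * U) : ℝ) : ℂ)
    + conj (Complex.exp ((Real.pi : ℂ) * Complex.I * (U : ℂ))) * Complex.exp ((2 * (Real.pi : ℂ) * Complex.I) * (θ : ℂ))

def atomBt (N : ℕ) (θ : ℝ) : Fin ((N - 1) ^ 2) → ℂ :=
  fun m => Complex.exp (2 * (Real.pi : ℂ) * Complex.I * ((m : ℕ) : ℂ) * (θ : ℂ))

def atomDt (N : ℕ) (f θ : ℝ) : Fin N × Fin ((N - 1) ^ 2) → ℂ :=
  fun p => atomA N f p.1 * atomBt N θ p.2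

/-!
Pairing with the certificate, `Re (q ⬝ᵥ star (P z)) = Σⱼ Re (conj aⱼ · Q(fⱼ, θⱼ)) ≤ Σⱼ |aⱼ|`
for every decomposition `z = Σⱼ aⱼ d(fⱼ, θⱼ)`, with equality only if every atom carrying weight
sits where `|Q| = 1`, that is, in `D`; at `z⋆` the pairing equals `Σₖ |cₖ|`. If `P z = P z⋆` and
`‖z‖_{A_c} ≤ ‖z⋆‖_{A_c} ≤ Σₖ |cₖ|`, an optimal decomposition of `z` (one exists: the unit ball of
the atomic norm is the convex hull of a compact set of atoms, compact by Carathéodory) is therefore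
supported on `D`. The measurement map is injective on the span of the atoms of `D`, so `z = z⋆`.
-/

namespace Complex

lemma norm_div_norm_le_one (c : ℂ) : ‖c / ‖c‖‖ ≤ 1 := by
  rw [norm_div, norm_real, norm_norm]
  exact div_self_le_one _

lemma norm_mul_div_norm (c : ℂ) : (‖c‖ : ℂ) * (c / ‖c‖) = c := by
  rcases eq_or_ne c 0 with rfl | hc
  · simp
  · field_simp

lemma conj_mul_div_norm (c : ℂ) : conj c * (c / ‖c‖) = ‖c‖ := by
  rcases eq_or_ne c 0 with rfl | hc
  · simp
  · rw [← mul_div_assoc, conj_mul', pow_two, mul_div_cancel_right₀ _ (by simpa)]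

lemma re_conj_mul_le_norm_mul (a Q : ℂ) : (conj a * Q).re ≤ ‖a‖ * ‖Q‖ :=
  (re_le_norm _).trans_eq (by rw [norm_mul, norm_conj])

lemma norm_eq_one_of_sum_norm_le_re {ι : Type*} [Fintype ι] {a Q : ι → ℂ}
    (hQ : ∀ i, ‖Q i‖ ≤ 1) (h : ∑ i, ‖a i‖ ≤ (∑ i, conj (a i) * Q i).re) {i : ι} (ha : a i ≠ 0) :
    ‖Q i‖ = 1 := by
  by_contra hne
  have hle : ∀ j ∈ Finset.univ, (conj (a j) * Q j).re ≤ ‖a j‖ := fun j _ =>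
    (re_conj_mul_le_norm_mul _ _).trans (mul_le_of_le_one_right (norm_nonneg _) (hQ j))
  have hlt : (conj (a i) * Q i).re < ‖a i‖ := (re_conj_mul_le_norm_mul _ _).trans_lt
    (mul_lt_of_lt_one_right (norm_pos_iff.2 ha) ((hQ i).lt_of_ne hne))
  have := Finset.sum_lt_sum hle ⟨i, Finset.mem_univ i, hlt⟩
  rw [re_sum] at h
  linarith

end Complex

theorem isCompact_convexHull {E : Type*} [AddCommGroup E] [Module ℝ E] [TopologicalSpace E]
    [IsTopologicalAddGroup E] [ContinuousSMul ℝ E] [FiniteDimensional ℝ E] {s : Set E}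
    (hs : IsCompact s) : IsCompact (convexHull ℝ s) := by
  have hcover : convexHull ℝ s = ⋃ k ∈ Finset.range (Module.finrank ℝ E + 2),
      (fun p : (Fin k → ℝ) × (Fin k → E) => ∑ i, p.1 i • p.2 i) ''
        (stdSimplex ℝ (Fin k) ×ˢ univ.pi fun _ => s) := by
    refine Subset.antisymm (fun x hx => ?_) ?_
    · obtain ⟨ι, _, z, w, hzs, hz, hw₀, hw₁, rfl⟩ := eq_pos_convex_span_of_mem_convexHull hx
      have hcard : Fintype.card ι < Module.finrank ℝ E + 2 :=
        Nat.lt_succ_of_le (hz.card_le_finrank_succ.trans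
          (Nat.succ_le_succ (Submodule.finrank_le _)))
      let e := Fintype.equivFin ι
      refine mem_biUnion (Finset.mem_range.2 hcard) ⟨(w ∘ e.symm, z ∘ e.symm),
        ⟨⟨fun i => (hw₀ _).le, ?_⟩, fun i _ => hzs (mem_range_self _)⟩, ?_⟩
      · simpa [← hw₁] using e.symm.sum_comp w
      · exact e.symm.sum_comp fun i => w i • z i
    · simp only [iUnion_subset_iff]
      rintro k - _ ⟨⟨w, z⟩, ⟨⟨hw₀, hw₁⟩, hz⟩, rfl⟩
      exact mem_convexHull_of_exists_fintype w z hw₀ hw₁ (fun i => hz i (mem_univ i)) rfl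
  rw [hcover]
  exact (Finset.range _).isCompact_biUnion fun k _ =>
    ((isCompact_stdSimplex ℝ (Fin k)).prod (isCompact_univ_pi fun _ => hs)).image (by fun_prop)

open scoped Pointwise in
theorem IsCompact.isClosed_setOf_mem_smul {E : Type*} [AddCommGroup E] [Module ℝ E]
    [TopologicalSpace E] [T2Space E] [ContinuousSMul ℝ E] {B : Set E} (hB : IsCompact B)
    (z : E) : IsClosed {s : ℝ | z ∈ s • B} := by
  have : CompactSpace B := isCompact_iff_compactSpace.mp hB
  have hfst : {s : ℝ | z ∈ s • B} = Prod.fst '' {p : ℝ × B | p.1 • (p.2 : E) = z} := by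
    ext s
    simp [mem_smul_set]
  rw [hfst]
  exact isClosedMap_fst_of_compactSpace _ (isClosed_eq (by fun_prop) continuous_const)

theorem Submodule.sum_smul_mem_span {R M ι : Type*} [Semiring R] [AddCommMonoid M] [Module R M]
    (s : Finset ι) {c : ι → R} {v : ι → M} {S : Set M} (h : ∀ i ∈ s, c i ≠ 0 → v i ∈ S) :
    ∑ i ∈ s, c i • v i ∈ Submodule.span R S := by
  refine Submodule.sum_mem _ fun i hi => ?_
  by_cases hc : c i = 0
  · simp [hc]
  · exact Submodule.smul_mem _ _ (Submodule.subset_span (h i hi hc))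

theorem LinearMap.injOn_span_of_linearIndependent_comp {R M M' ι : Type*} [Ring R]
    [AddCommGroup M] [Module R M] [AddCommGroup M'] [Module R M'] [Fintype ι]
    (L : M →ₗ[R] M') {v : ι → M} (hv : LinearIndependent R (L ∘ v)) :
    InjOn L (Submodule.span R (Set.range v)) := by
  rintro x hx y hy hxy
  obtain ⟨a, rfl⟩ := Submodule.mem_span_range_iff_exists_fun R |>.1 hx
  obtain ⟨b, rfl⟩ := Submodule.mem_span_range_iff_exists_fun R |>.1 hy
  simp only [map_sum, map_smul] at hxy
  rw [funext (Fintype.linearIndependent_iffₛ.1 hv a b hxy)]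

lemma atomA_fract (N : ℕ) (f : ℝ) : atomA N (Int.fract f) = atomA N f := by
  funext n
  have h : 2 * (π : ℂ) * I * (n : ℕ) * f
      = 2 * π * I * (n : ℕ) * (Int.fract f : ℝ) + ((n * ⌊f⌋ : ℤ) : ℂ) * (2 * π * I) := by
    rw [← Int.self_sub_floor]
    push_cast
    ring
  simp only [atomA]
  rw [h, exp_add, exp_int_mul_two_pi_mul_I, mul_one]

lemma atomD_fract (N : ℕ) (f θ : ℝ) : atomD N (Int.fract f) θ = atomD N f θ := by
  unfold atomD
  rw [atomA_fract]

lemma continuous_atomD (N : ℕ) : Continuous fun p : ℝ × ℝ => atomD N p.1 p.2 := by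
  refine continuous_pi fun p => ?_
  simp only [atomD, atomA, atomB]
  fun_prop

-- `f` ranges over a closed interval to make the set compact; by `atomD_fract` no atom is added.
def atomSet (N : ℕ) (U : ℝ) : Set (Fin N × Fin ((N - 1) ^ 2 + 1) → ℂ) :=
  (fun p : ℂ × ℝ × ℝ => p.1 • atomD N p.2.1 p.2.2) ''
    (Metric.closedBall 0 1 ×ˢ Icc 0 1 ×ˢ Icc 0 U)

lemma isCompact_atomSet (N : ℕ) (U : ℝ) : IsCompact (atomSet N U) :=
  ((isCompact_closedBall _ _).prod (isCompact_Icc.prod isCompact_Icc)).image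
    (continuous_fst.smul ((continuous_atomD N).comp continuous_snd))

section Decomposition

open scoped Pointwise

variable {N : ℕ} {U : ℝ}

lemma atomicNorm_le_ofReal_sum_norm {K : ℕ} {c : Fin K → ℂ} {f θ : Fin K → ℝ}
    (hf : ∀ k, f k ∈ Ico (0 : ℝ) 1) (hθ : ∀ k, θ k ∈ Icc (0 : ℝ) U) :
    atomicNorm N U (∑ k, c k • atomD N (f k) (θ k)) ≤ ENNReal.ofReal (∑ k, ‖c k‖) :=
  sInf_le ⟨K, c, f, θ, hf, hθ, rfl, ENNReal.ofReal_sum_of_nonneg fun _ _ => norm_nonneg _⟩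

lemma exists_decomposition_of_atomicNorm_lt {z : Fin N × Fin ((N - 1) ^ 2 + 1) → ℂ} {r : ℝ}
    (h : atomicNorm N U z < ENNReal.ofReal r) :
    ∃ (K : ℕ) (c : Fin K → ℂ) (f θ : Fin K → ℝ),
      (∀ k, f k ∈ Ico (0 : ℝ) 1) ∧ (∀ k, θ k ∈ Icc (0 : ℝ) U) ∧
      z = ∑ k, c k • atomD N (f k) (θ k) ∧ ∑ k, ‖c k‖ < r := by
  obtain ⟨_, ⟨K, c, f, θ, hf, hθ, hz, rfl⟩, hlt⟩ := sInf_lt_iff.1 h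
  rw [← ENNReal.ofReal_sum_of_nonneg fun _ _ => norm_nonneg _] at hlt
  exact ⟨K, c, f, θ, hf, hθ, hz, (ENNReal.ofReal_lt_ofReal_iff'.1 hlt).1⟩

lemma sum_smul_atomD_mem_smul_convexHull (hU : 0 ≤ U) {K : ℕ} {c : Fin K → ℂ}
    {f θ : Fin K → ℝ} (hf : ∀ k, f k ∈ Ico (0 : ℝ) 1) (hθ : ∀ k, θ k ∈ Icc (0 : ℝ) U) :
    ∑ k, c k • atomD N (f k) (θ k) ∈ (∑ k, ‖c k‖) • convexHull ℝ (atomSet N U) := by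
  rcases (Finset.sum_nonneg fun k _ => norm_nonneg (c k)).eq_or_lt with hzero | hpos
  · have hc : ∀ k, c k = 0 := fun k => norm_eq_zero.1 <|
      (Finset.sum_eq_zero_iff_of_nonneg fun k _ => norm_nonneg (c k)).1 hzero.symm k
      (Finset.mem_univ k)
    have hne : (convexHull ℝ (atomSet N U)).Nonempty :=
      ⟨_, subset_convexHull ℝ _ ⟨(0, 0, 0), ⟨by simp, by simp, le_rfl, hU⟩, rfl⟩⟩
    simp [hc, zero_smul_set hne]
  · refine mem_smul_set.2 ⟨_, Finset.centerMass_mem_convexHull Finset.univ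
      (w := fun k => ‖c k‖) (z := fun k => (c k / ‖c k‖) • atomD N (f k) (θ k))
      (fun k _ => norm_nonneg _) hpos fun k _ =>
        ⟨(c k / ‖c k‖, f k, θ k), ⟨by simpa using (c k).norm_div_norm_le_one,
          Ico_subset_Icc_self (hf k), hθ k⟩, rfl⟩, ?_⟩
    rw [Finset.centerMass, smul_smul, mul_inv_cancel₀ hpos.ne', one_smul]
    refine Finset.sum_congr rfl fun k _ => ?_
    rw [← smul_assoc, Complex.real_smul, Complex.norm_mul_div_norm]

lemma exists_decomposition_of_mem_smul_convexHull {z : Fin N × Fin ((N - 1) ^ 2 + 1) → ℂ}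
    {s : ℝ} (hs : 0 ≤ s) (h : z ∈ s • convexHull ℝ (atomSet N U)) :
    ∃ (K : ℕ) (c : Fin K → ℂ) (f θ : Fin K → ℝ),
      (∀ k, f k ∈ Ico (0 : ℝ) 1) ∧ (∀ k, θ k ∈ Icc (0 : ℝ) U) ∧
      z = ∑ k, c k • atomD N (f k) (θ k) ∧ ∑ k, ‖c k‖ ≤ s := by
  obtain ⟨y, hy, rfl⟩ := h
  obtain ⟨ι, _, w, a, hw₀, hw₁, ha, rfl⟩ := mem_convexHull_iff_exists_fintype.1 hy
  choose p hp hpa using ha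
  let e := (Fintype.equivFin ι).symm
  refine ⟨Fintype.card ι, fun k => ((s * w (e k) : ℝ) : ℂ) * (p (e k)).1,
    fun k => Int.fract (p (e k)).2.1, fun k => (p (e k)).2.2,
    fun k => ⟨Int.fract_nonneg _, Int.fract_lt_one _⟩, fun k => (hp (e k)).2.2, ?_, ?_⟩
  · dsimp only
    rw [Finset.smul_sum, ← e.sum_comp]
    refine Finset.sum_congr rfl fun k _ => ?_
    rw [atomD_fract, ← hpa, mul_smul, Complex.coe_smul, smul_smul]
  · calc ∑ k, ‖((s * w (e k) : ℝ) : ℂ) * (p (e k)).1‖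
        ≤ ∑ k, s * w (e k) := Finset.sum_le_sum fun k _ => by
          rw [norm_mul, Complex.norm_real, Real.norm_of_nonneg (mul_nonneg hs (hw₀ _))]
          exact mul_le_of_le_one_right (mul_nonneg hs (hw₀ _)) (by simpa using (hp (e k)).1)
      _ = s := by rw [← Finset.mul_sum, e.sum_comp w, hw₁, mul_one]

theorem exists_decomposition_eq_atomicNorm (hU : 0 ≤ U)
    {z : Fin N × Fin ((N - 1) ^ 2 + 1) → ℂ} (h : atomicNorm N U z ≠ ⊤) :
    ∃ (K : ℕ) (c : Fin K → ℂ) (f θ : Fin K → ℝ),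
      (∀ k, f k ∈ Ico (0 : ℝ) 1) ∧ (∀ k, θ k ∈ Icc (0 : ℝ) U) ∧
      z = ∑ k, c k • atomD N (f k) (θ k) ∧ atomicNorm N U z = ENNReal.ofReal (∑ k, ‖c k‖) := by
  set a := (atomicNorm N U z).toReal
  set T := {s : ℝ | z ∈ s • convexHull ℝ (atomSet N U)} ∩ Ici 0
  have hT : ∀ ε > 0, ∃ s ∈ T, s < a + ε := by
    intro ε hε
    have hlt : atomicNorm N U z < ENNReal.ofReal (a + ε) := by
      rw [← ENNReal.ofReal_toReal h]
      exact ENNReal.ofReal_lt_ofReal_iff'.2 ⟨by linarith, by positivity⟩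
    obtain ⟨K, c, f, θ, hf, hθ, rfl, hcost⟩ := exists_decomposition_of_atomicNorm_lt hlt
    exact ⟨_, ⟨sum_smul_atomD_mem_smul_convexHull hU hf hθ,
      Finset.sum_nonneg fun _ _ => norm_nonneg _⟩, hcost⟩
  have hbdd : BddBelow T := ⟨0, fun s hs => hs.2⟩
  obtain ⟨s₁, hs₁, -⟩ := hT 1 one_pos
  have hmem : sInf T ∈ T :=
    (((isCompact_convexHull (isCompact_atomSet N U)).isClosed_setOf_mem_smul z).inter
      isClosed_Ici).csInf_mem ⟨s₁, hs₁⟩ hbdd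
  have hle : sInf T ≤ a := le_of_forall_pos_lt_add fun ε hε => by
    obtain ⟨s, hs, hlt⟩ := hT ε hε
    exact (csInf_le hbdd hs).trans_lt hlt
  obtain ⟨K, c, f, θ, hf, hθ, rfl, hcost⟩ :=
    exists_decomposition_of_mem_smul_convexHull hmem.2 hmem.1
  refine ⟨K, c, f, θ, hf, hθ, rfl, le_antisymm (atomicNorm_le_ofReal_sum_norm hf hθ) ?_⟩
  calc atomicNorm N U (∑ k, c k • atomD N (f k) (θ k))
      = ENNReal.ofReal a := (ENNReal.ofReal_toReal h).symm
    _ ≥ ENNReal.ofReal (∑ k, ‖c k‖) := ENNReal.ofReal_le_ofReal (hcost.trans hle)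

end Decomposition

def measLinearMap (N : ℕ) : (Fin N × Fin ((N - 1) ^ 2 + 1) → ℂ) →ₗ[ℂ] (Fin N → ℂ) where
  toFun := meas N
  map_add' _ _ := rfl
  map_smul' _ _ := rfl

lemma measLinearMap_apply (N : ℕ) (z : Fin N × Fin ((N - 1) ^ 2 + 1) → ℂ) :
    measLinearMap N z = meas N z :=
  rfl

lemma dotProduct_star_meas_atomD (N : ℕ) (q : Fin N → ℂ) (f θ : ℝ) :
    q ⬝ᵥ star (meas N (atomD N f θ)) = dualPoly N q f θ := by
  refine Finset.sum_congr rfl fun n _ => ?_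
  simp only [Pi.star_apply, meas, atomD, atomA, atomB, star_def, map_mul, ← exp_conj]
  rw [← exp_add]
  congr 2
  simp only [map_ofNat, conj_ofReal, conj_I, conj_natCast]
  push_cast
  ring

lemma dotProduct_star_meas_sum (N : ℕ) (q : Fin N → ℂ) {K : ℕ} (c : Fin K → ℂ)
    (f θ : Fin K → ℝ) :
    q ⬝ᵥ star (meas N (∑ k, c k • atomD N (f k) (θ k)))
      = ∑ k, conj (c k) * dualPoly N q (f k) (θ k) := by
  rw [← measLinearMap_apply, map_sum]
  simp only [map_smul, measLinearMap_apply, star_sum, star_smul, dotProduct_sum, dotProduct_smul,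
    dotProduct_star_meas_atomD, smul_eq_mul, star_def]

section Certificate

variable {N K : ℕ} {U : ℝ} {q : Fin N → ℂ} {c : Fin K → ℂ} {f θ : Fin K → ℝ}

lemma dotProduct_star_meas_eq_sum_norm
    (hQeq : ∀ k, dualPoly N q (f k) (θ k) = c k / ((‖c k‖ : ℝ) : ℂ)) :
    q ⬝ᵥ star (meas N (∑ k, c k • atomD N (f k) (θ k))) = ((∑ k, ‖c k‖ : ℝ) : ℂ) := by
  rw [dotProduct_star_meas_sum, ofReal_sum]
  exact Finset.sum_congr rfl fun k _ => by rw [hQeq, conj_mul_div_norm]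

lemma norm_dualPoly_le_one (hQeq : ∀ k, dualPoly N q (f k) (θ k) = c k / ((‖c k‖ : ℝ) : ℂ))
    (hQlt : ∀ f' θ' : ℝ, f' ∈ Ico (0 : ℝ) 1 → θ' ∈ Icc (0 : ℝ) U →
      (f', θ') ∉ range (fun k => (f k, θ k)) → ‖dualPoly N q f' θ'‖ < 1)
    {f' θ' : ℝ} (hf' : f' ∈ Ico (0 : ℝ) 1) (hθ' : θ' ∈ Icc (0 : ℝ) U) :
    ‖dualPoly N q f' θ'‖ ≤ 1 := by
  by_cases hD : (f', θ') ∈ range fun k => (f k, θ k)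
  · obtain ⟨k, hk⟩ := hD
    cases hk
    exact (hQeq k).symm ▸ (c k).norm_div_norm_le_one
  · exact (hQlt f' θ' hf' hθ' hD).le

lemma mem_range_atomD_of_sum_norm_le_re
    (hQeq : ∀ k, dualPoly N q (f k) (θ k) = c k / ((‖c k‖ : ℝ) : ℂ))
    (hQlt : ∀ f' θ' : ℝ, f' ∈ Ico (0 : ℝ) 1 → θ' ∈ Icc (0 : ℝ) U →
      (f', θ') ∉ range (fun k => (f k, θ k)) → ‖dualPoly N q f' θ'‖ < 1)
    {K' : ℕ} {c' : Fin K' → ℂ} {f' θ' : Fin K' → ℝ}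
    (hf' : ∀ j, f' j ∈ Ico (0 : ℝ) 1) (hθ' : ∀ j, θ' j ∈ Icc (0 : ℝ) U)
    (hcost : ∑ j, ‖c' j‖ ≤ (∑ j, conj (c' j) * dualPoly N q (f' j) (θ' j)).re)
    {j : Fin K'} (hj : c' j ≠ 0) :
    atomD N (f' j) (θ' j) ∈ range fun k => atomD N (f k) (θ k) := by
  have hQ : ‖dualPoly N q (f' j) (θ' j)‖ = 1 := norm_eq_one_of_sum_norm_le_re
    (fun i => norm_dualPoly_le_one hQeq hQlt (hf' i) (hθ' i)) hcost hj
  obtain ⟨k, hk⟩ : (f' j, θ' j) ∈ range fun k => (f k, θ k) :=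
    by_contra fun hD => (hQlt _ _ (hf' j) (hθ' j) hD).ne hQ
  obtain ⟨hfk, hθk⟩ := Prod.mk.inj hk
  exact ⟨k, by simp only [hfk, hθk]⟩

end Certificate

theorem unique_minimizer_of_dual_certificate_general (N : ℕ) (U : ℝ)
    (hU : U ∈ Set.Ioo (0 : ℝ) 1) (K : ℕ)
    (c : Fin K → ℂ) (f θ : Fin K → ℝ)
    (hf : ∀ k, f k ∈ Set.Ico (0 : ℝ) 1) (hθ : ∀ k, θ k ∈ Set.Icc (0 : ℝ) U)
    (q : Fin N → ℂ)
    (hQeq : ∀ k, dualPoly N q (f k) (θ k) = c k / ((‖c k‖ : ℝ) : ℂ))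
    (hQlt : ∀ f' θ' : ℝ, f' ∈ Set.Ico (0 : ℝ) 1 → θ' ∈ Set.Icc (0 : ℝ) U →
      (f', θ') ∉ Set.range (fun k => (f k, θ k)) →
      ‖dualPoly N q f' θ'‖ < 1)
    (hind : LinearIndependent ℂ (fun k => meas N (atomD N (f k) (θ k)))) :
    ∀ z : Fin N × Fin ((N - 1) ^ 2 + 1) → ℂ,
      meas N z = meas N (∑ k, c k • atomD N (f k) (θ k)) →
      z ≠ ∑ k, c k • atomD N (f k) (θ k) →
      atomicNorm N U (∑ k, c k • atomD N (f k) (θ k)) < atomicNorm N U z := by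
  intro z hmeas hne
  refine lt_of_not_ge fun hle => hne ?_
  have hz_le := hle.trans (atomicNorm_le_ofReal_sum_norm hf hθ)
  obtain ⟨K', c', f', θ', hf', hθ', rfl, hnorm⟩ :=
    exists_decomposition_eq_atomicNorm hU.1.le (ne_top_of_le_ne_top ENNReal.ofReal_ne_top hz_le)
  have hcost : ∑ j, ‖c' j‖ ≤ (∑ j, conj (c' j) * dualPoly N q (f' j) (θ' j)).re := by
    rw [← dotProduct_star_meas_sum, hmeas, dotProduct_star_meas_eq_sum_norm hQeq, ofReal_re]
    exact (ENNReal.ofReal_le_ofReal_iff (Finset.sum_nonneg fun _ _ => norm_nonneg _)).1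
      (hnorm ▸ hz_le)
  have hinj := (measLinearMap N).injOn_span_of_linearIndependent_comp
    (v := fun k => atomD N (f k) (θ k)) hind
  refine hinj (Submodule.sum_smul_mem_span _ fun j _ =>
      mem_range_atomD_of_sum_norm_le_re hQeq hQlt hf' hθ' hcost)
    (Submodule.mem_span_range_iff_exists_fun ℂ |>.2 ⟨c, rfl⟩) ?_
  simpa only [measLinearMap_apply] using hmeas

/-- Dual certificate + linear independence imply that `z⋆` is the unique
minimizer of the constrained atomic norm subject to the measurement constraint. -/
theorem unique_minimizer_of_dual_certificate (N : ℕ) (hN : 2 ≤ N) (U : ℝ)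
    (hU : U ∈ Set.Ioo (0 : ℝ) 1) (K : ℕ) (hK : K < N)
    (c : Fin K → ℂ) (f θ : Fin K → ℝ)
    (hc : ∀ k, c k ≠ 0)
    (hf : ∀ k, f k ∈ Set.Ico (0 : ℝ) 1) (hθ : ∀ k, θ k ∈ Set.Icc (0 : ℝ) U)
    (hdist : Function.Injective (fun k => (f k, θ k)))
    (q : Fin N → ℂ)
    (hQeq : ∀ k, dualPoly N q (f k) (θ k) = c k / ((‖c k‖ : ℝ) : ℂ))
    (hQlt : ∀ f' θ' : ℝ, f' ∈ Set.Ico (0 : ℝ) 1 → θ' ∈ Set.Icc (0 : ℝ) U →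
      (f', θ') ∉ Set.range (fun k => (f k, θ k)) →
      ‖dualPoly N q f' θ'‖ < 1)
    (hind : LinearIndependent ℂ (fun k => meas N (atomD N (f k) (θ k)))) :
    ∀ z : Fin N × Fin ((N - 1) ^ 2 + 1) → ℂ,
      meas N z = meas N (∑ k, c k • atomD N (f k) (θ k)) →
      z ≠ ∑ k, c k • atomD N (f k) (θ k) →
      atomicNorm N U (∑ k, c k • atomD N (f k) (θ k)) < atomicNorm N U z :=
  unique_minimizer_of_dual_certificate_general N U hU K c f θ hf hθ q hQeq hQlt hind

end
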